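/- arXiv:2408.14476 — 8 statements merged into one kernel-verified Lean document; each statement's English description precedes it below -/
import Mathlib

section
/- Consider an individual with skill n > 0 facing the piecewise-linear tax t with parameters α ≥ 0, β1, β2 ∈ (0,1], kink y1 > 0, in the concave case β1 ≤ β2. If 0 < n ≤ n3 = √(2y1/(β1+β2)), then the function l ↦ u(nl − t(nl), l) = (nl − t(nl)) − l²/2 attains its maximum over l ≥ 0 at l = β1·n, the maximal utility value equals α + β1²n²/2, and the tax paid at the optimum equals −α + (1−β1)β1n². -/
/-!
Below the kink the utility is `α + β1² n² / 2 - (l - β1 n)² / 2`, above it it is at most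
`α + β2² n² / 2 - (β2 - β1) y1`. The condition `n ≤ n3` says `(β1 + β2) n² ≤ 2 y1`, which both
keeps the income `β1 n²` of the candidate optimum below the kink and, as `β1 ≤ β2`, makes the
bound above the kink no larger than the value `α + β1² n² / 2` at `l = β1 n`.
-/

open MeasureTheory Set

/-- Piecewise-linear two-bracket tax with subsidy `α`, retained proportions `β1, β2`
and kink point `y1`. -/
noncomputable def tax (α β1 β2 y1 y : ℝ) : ℝ :=
  if y ≤ y1 then -α + (1 - β1) * y
  else -α + (1 - β1) * y1 + (1 - β2) * (y - y1)

noncomputable def utility (α β1 β2 y1 n l : ℝ) : ℝ :=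
  (n * l - tax α β1 β2 y1 (n * l)) - l ^ 2 / 2

section

variable {α β1 β2 y1 n l y : ℝ}

theorem tax_of_le (h : y ≤ y1) : tax α β1 β2 y1 y = -α + (1 - β1) * y := if_pos h

theorem tax_of_lt (h : y1 < y) :
    tax α β1 β2 y1 y = -α + (1 - β1) * y1 + (1 - β2) * (y - y1) := if_neg h.not_ge

theorem utility_of_le (h : n * l ≤ y1) :
    utility α β1 β2 y1 n l = α + β1 ^ 2 * n ^ 2 / 2 - (l - β1 * n) ^ 2 / 2 := by
  rw [utility, tax_of_le h]
  ring

theorem utility_of_lt (h : y1 < n * l) :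
    utility α β1 β2 y1 n l
      = α + β2 ^ 2 * n ^ 2 / 2 - (β2 - β1) * y1 - (l - β2 * n) ^ 2 / 2 := by
  rw [utility, tax_of_lt h]
  ring

theorem mul_sq_le_of_le_sqrt_div {s c : ℝ} (hs : 0 < s) (hn : 0 < n) (h : n ≤ √(c / s)) :
    s * n ^ 2 ≤ c := by
  rw [mul_comm, ← le_div_iff₀ hs, ← Real.le_sqrt' hn]
  exact h

theorem mul_mul_le_of_add_mul_sq_le (hcase : β1 ≤ β2) (hkink : (β1 + β2) * n ^ 2 ≤ 2 * y1) :
    n * (β1 * n) ≤ y1 := by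
  nlinarith [sq_nonneg n]

theorem isMaxOn_utility (hcase : β1 ≤ β2) (hkink : (β1 + β2) * n ^ 2 ≤ 2 * y1) :
    IsMaxOn (utility α β1 β2 y1 n) univ (β1 * n) := by
  intro l _
  rw [mem_ofPred_eq, utility_of_le (mul_mul_le_of_add_mul_sq_le hcase hkink)]
  rcases le_or_gt (n * l) y1 with h | h
  · rw [utility_of_le h]
    nlinarith [sq_nonneg (l - β1 * n)]
  · have hgap : (β2 - β1) * ((β1 + β2) * n ^ 2 - 2 * y1) ≤ 0 :=
      mul_nonpos_of_nonneg_of_nonpos (sub_nonneg.2 hcase) (sub_nonpos.2 hkink)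
    rw [utility_of_lt h]
    nlinarith [sq_nonneg (l - β2 * n)]

end

theorem stmt0_general (α β1 β2 y1 n : ℝ)
    (hβ1 : β1 ∈ Set.Ioc (0:ℝ) 1) (hβ2 : β2 ∈ Set.Ioc (0:ℝ) 1)
    (hcase : β1 ≤ β2) (hn : 0 < n)
    (hn3 : n ≤ Real.sqrt (2 * y1 / (β1 + β2))) :
    IsMaxOn (fun l => (n * l - tax α β1 β2 y1 (n * l)) - l ^ 2 / 2) (Set.Ici 0) (β1 * n) ∧
    (n * (β1 * n) - tax α β1 β2 y1 (n * (β1 * n))) - (β1 * n) ^ 2 / 2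
      = α + β1 ^ 2 * n ^ 2 / 2 ∧
    tax α β1 β2 y1 (n * (β1 * n)) = -α + (1 - β1) * β1 * n ^ 2 := by
  have hkink : (β1 + β2) * n ^ 2 ≤ 2 * y1 :=
    mul_sq_le_of_le_sqrt_div (add_pos hβ1.1 hβ2.1) hn hn3
  have htax : tax α β1 β2 y1 (n * (β1 * n)) = -α + (1 - β1) * β1 * n ^ 2 := by
    rw [tax_of_le (mul_mul_le_of_add_mul_sq_le hcase hkink)]
    ring
  refine ⟨(isMaxOn_utility hcase hkink).on_subset (subset_univ _), ?_, htax⟩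
  rw [htax]
  ring

/-- Concave case `β1 ≤ β2`, `0 < n ≤ n3 = √(2 y1 / (β1 + β2))`: the optimal effort is
`β1 n`, the maximal utility is `α + β1² n² / 2`, and the tax paid is
`-α + (1 - β1) β1 n²`. -/
theorem stmt0 (α β1 β2 y1 n : ℝ)
    (hα : 0 ≤ α) (hβ1 : β1 ∈ Set.Ioc (0:ℝ) 1) (hβ2 : β2 ∈ Set.Ioc (0:ℝ) 1)
    (hy1 : 0 < y1) (hcase : β1 ≤ β2) (hn : 0 < n)
    (hn3 : n ≤ Real.sqrt (2 * y1 / (β1 + β2))) :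
    IsMaxOn (fun l => (n * l - tax α β1 β2 y1 (n * l)) - l ^ 2 / 2) (Set.Ici 0) (β1 * n) ∧
    (n * (β1 * n) - tax α β1 β2 y1 (n * (β1 * n))) - (β1 * n) ^ 2 / 2
      = α + β1 ^ 2 * n ^ 2 / 2 ∧
    tax α β1 β2 y1 (n * (β1 * n)) = -α + (1 - β1) * β1 * n ^ 2 :=
  stmt0_general α β1 β2 y1 n hβ1 hβ2 hcase hn hn3
end

section
/- Consider an individual with skill n > 0 facing the piecewise-linear tax t with parameters α ≥ 0, β1, β2 ∈ (0,1], kink y1 > 0, in the concave case β1 ≤ β2. If n ≥ n3 = √(2y1/(β1+β2)), then the function l ↦ u(nl − t(nl), l) = (nl − t(nl)) − l²/2 attains its maximum over l ≥ 0 at l = β2·n, the maximal utility value equals α + β2²n²/2 − y1(β2−β1), and the tax paid at the optimum equals −α + (1−β2)β2n² + (β2−β1)y1. -/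
/-!
For `β1 ≤ β2` consumption `y - t(y)` is the maximum of the two affine branches, so utility is
the upper envelope of two concave quadratics in `l`, peaking at `β1 n` with value
`α + β1² n² / 2` and at `β2 n` with value `α + β2² n² / 2 - (β2 - β1) y1`. The condition
`n ≥ n3` says exactly that the second peak is the higher one, and it puts `β2 n` past the kink.
-/

open MeasureTheory Set

theorem tax_eq_of_le {α β1 β2 y1 y : ℝ} (h : y1 ≤ y) :
    tax α β1 β2 y1 y = -α + (1 - β2) * y + (β2 - β1) * y1 := by
  unfold tax
  split_ifs with h'
  · obtain rfl : y = y1 := le_antisymm h' h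
    ring
  · ring

theorem sub_tax_eq_max {α β1 β2 y1 : ℝ} (hβ : β1 ≤ β2) (y : ℝ) :
    y - tax α β1 β2 y1 y = α + max (β1 * y) (β1 * y1 + β2 * (y - y1)) := by
  unfold tax
  split_ifs with h
  · rw [max_eq_left (by nlinarith)]
    ring
  · rw [max_eq_right (by nlinarith)]
    ring

theorem mul_sub_sq_div_two_le (b l : ℝ) : b * l - l ^ 2 / 2 ≤ b ^ 2 / 2 := by
  nlinarith [sq_nonneg (l - b)]

theorem le_mul_sq_of_sqrt_div_le {x s n : ℝ} (hs : 0 < s) (h : Real.sqrt (x / s) ≤ n) :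
    x ≤ s * n ^ 2 := by
  rw [Real.sqrt_le_iff, div_le_iff₀ hs] at h
  linarith [h.2]

theorem stmt1_general (α β1 β2 y1 n : ℝ)
    (hβ1 : β1 ∈ Set.Ioc (0:ℝ) 1)
    (hcase : β1 ≤ β2)
    (hn3 : Real.sqrt (2 * y1 / (β1 + β2)) ≤ n) :
    IsMaxOn (fun l => (n * l - tax α β1 β2 y1 (n * l)) - l ^ 2 / 2) (Set.Ici 0) (β2 * n) ∧
    (n * (β2 * n) - tax α β1 β2 y1 (n * (β2 * n))) - (β2 * n) ^ 2 / 2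
      = α + β2 ^ 2 * n ^ 2 / 2 - y1 * (β2 - β1) ∧
    tax α β1 β2 y1 (n * (β2 * n)) = -α + (1 - β2) * β2 * n ^ 2 + (β2 - β1) * y1 := by
  have hkink : 2 * y1 ≤ (β1 + β2) * n ^ 2 :=
    le_mul_sq_of_sqrt_div_le (by linarith [hβ1.1]) hn3
  have htax : tax α β1 β2 y1 (n * (β2 * n)) = -α + (1 - β2) * β2 * n ^ 2 + (β2 - β1) * y1 := by
    rw [tax_eq_of_le (by nlinarith)]
    ring
  have hvalue : (n * (β2 * n) - tax α β1 β2 y1 (n * (β2 * n))) - (β2 * n) ^ 2 / 2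
      = α + β2 ^ 2 * n ^ 2 / 2 - y1 * (β2 - β1) := by
    rw [htax]
    ring
  refine ⟨fun l _ => ?_, hvalue, htax⟩
  show n * l - tax α β1 β2 y1 (n * l) - l ^ 2 / 2 ≤
    n * (β2 * n) - tax α β1 β2 y1 (n * (β2 * n)) - (β2 * n) ^ 2 / 2
  rw [hvalue, sub_tax_eq_max hcase]
  have hlow := mul_sub_sq_div_two_le (β1 * n) l
  have hhigh := mul_sub_sq_div_two_le (β2 * n) l
  have hgap := mul_le_mul_of_nonneg_left hkink (sub_nonneg.2 hcase)
  have : max (β1 * (n * l)) (β1 * y1 + β2 * (n * l - y1))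
      ≤ β2 ^ 2 * n ^ 2 / 2 - y1 * (β2 - β1) + l ^ 2 / 2 :=
    max_le (by nlinarith) (by nlinarith)
  linarith

/-- Concave case `β1 ≤ β2`, `n ≥ n3 = √(2 y1 / (β1 + β2))`: the optimal effort is `β2 n`,
the maximal utility is `α + β2² n² / 2 - y1 (β2 - β1)`, and the tax paid is
`-α + (1 - β2) β2 n² + (β2 - β1) y1`. -/
theorem stmt1 (α β1 β2 y1 n : ℝ)
    (hα : 0 ≤ α) (hβ1 : β1 ∈ Set.Ioc (0:ℝ) 1) (hβ2 : β2 ∈ Set.Ioc (0:ℝ) 1)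
    (hy1 : 0 < y1) (hcase : β1 ≤ β2) (hn : 0 < n)
    (hn3 : Real.sqrt (2 * y1 / (β1 + β2)) ≤ n) :
    IsMaxOn (fun l => (n * l - tax α β1 β2 y1 (n * l)) - l ^ 2 / 2) (Set.Ici 0) (β2 * n) ∧
    (n * (β2 * n) - tax α β1 β2 y1 (n * (β2 * n))) - (β2 * n) ^ 2 / 2
      = α + β2 ^ 2 * n ^ 2 / 2 - y1 * (β2 - β1) ∧
    tax α β1 β2 y1 (n * (β2 * n)) = -α + (1 - β2) * β2 * n ^ 2 + (β2 - β1) * y1 :=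
  stmt1_general α β1 β2 y1 n hβ1 hcase hn3
end

section
/- Consider an individual with skill n > 0 facing the piecewise-linear tax t with parameters α ≥ 0, β1, β2 ∈ (0,1], kink y1 > 0, in the convex case β1 ≥ β2. If 0 < n < n1 = √(y1/β1), then the function l ↦ u(nl − t(nl), l) = (nl − t(nl)) − l²/2 attains its maximum over l ≥ 0 at l = β1·n, the maximal utility value equals α + β1²n²/2, and the tax paid at the optimum equals −α + (1−β1)β1n². -/
/-!
When `β2 ≤ β1` the tax lies above the linear tax `-α + (1 - β1) y` of the first bracket, so
utility is bounded by the utility `α + β1 n l - l² / 2` under that linear tax, which is maximal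
at `l = β1 n`. For `n < n1` this effort yields the income `β1 n² < y1` below the kink, where the
two taxes agree, so the bound is attained.
-/

open MeasureTheory Set

theorem tax_of_le_kink {α β1 β2 y1 y : ℝ} (hy : y ≤ y1) :
    tax α β1 β2 y1 y = -α + (1 - β1) * y :=
  if_pos hy

theorem linear_tax_le_tax {α β1 β2 y1 : ℝ} (hβ : β2 ≤ β1) (y : ℝ) :
    -α + (1 - β1) * y ≤ tax α β1 β2 y1 y := by
  unfold tax
  split_ifs with hy
  · exact le_rfl
  · nlinarith

theorem utility_under_linear_tax_le (α β n l : ℝ) :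
    n * l - (-α + (1 - β) * (n * l)) - l ^ 2 / 2 ≤ α + β ^ 2 * n ^ 2 / 2 := by
  nlinarith [sq_nonneg (l - β * n)]

theorem stmt2_general (α β1 β2 y1 n : ℝ)
    (hβ1 : β1 ∈ Set.Ioc (0:ℝ) 1)
    (hcase : β2 ≤ β1) (hn : 0 < n)
    (hn1 : n < Real.sqrt (y1 / β1)) :
    IsMaxOn (fun l => (n * l - tax α β1 β2 y1 (n * l)) - l ^ 2 / 2) (Set.Ici 0) (β1 * n) ∧
    (n * (β1 * n) - tax α β1 β2 y1 (n * (β1 * n))) - (β1 * n) ^ 2 / 2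
      = α + β1 ^ 2 * n ^ 2 / 2 ∧
    tax α β1 β2 y1 (n * (β1 * n)) = -α + (1 - β1) * β1 * n ^ 2 := by
  have hkink : n * (β1 * n) ≤ y1 := by
    have hsq := (Real.lt_sqrt hn.le).mp hn1
    rw [lt_div_iff₀ hβ1.1] at hsq
    nlinarith
  have htax : tax α β1 β2 y1 (n * (β1 * n)) = -α + (1 - β1) * (n * (β1 * n)) :=
    tax_of_le_kink hkink
  have hvalue : (n * (β1 * n) - tax α β1 β2 y1 (n * (β1 * n))) - (β1 * n) ^ 2 / 2
      = α + β1 ^ 2 * n ^ 2 / 2 := by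
    rw [htax]; ring
  refine ⟨fun l _ => ?_, hvalue, htax.trans (by ring)⟩
  calc n * l - tax α β1 β2 y1 (n * l) - l ^ 2 / 2
      ≤ n * l - (-α + (1 - β1) * (n * l)) - l ^ 2 / 2 := by
        gcongr; exact linear_tax_le_tax hcase _
    _ ≤ α + β1 ^ 2 * n ^ 2 / 2 := utility_under_linear_tax_le α β1 n l
    _ = _ := hvalue.symm

/-- Convex case `β1 ≥ β2`, `0 < n < n1 = √(y1 / β1)`: the optimal effort is `β1 n`,
the maximal utility is `α + β1² n² / 2`, and the tax paid is `-α + (1 - β1) β1 n²`. -/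
theorem stmt2 (α β1 β2 y1 n : ℝ)
    (hα : 0 ≤ α) (hβ1 : β1 ∈ Set.Ioc (0:ℝ) 1) (hβ2 : β2 ∈ Set.Ioc (0:ℝ) 1)
    (hy1 : 0 < y1) (hcase : β2 ≤ β1) (hn : 0 < n)
    (hn1 : n < Real.sqrt (y1 / β1)) :
    IsMaxOn (fun l => (n * l - tax α β1 β2 y1 (n * l)) - l ^ 2 / 2) (Set.Ici 0) (β1 * n) ∧
    (n * (β1 * n) - tax α β1 β2 y1 (n * (β1 * n))) - (β1 * n) ^ 2 / 2
      = α + β1 ^ 2 * n ^ 2 / 2 ∧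
    tax α β1 β2 y1 (n * (β1 * n)) = -α + (1 - β1) * β1 * n ^ 2 :=
  stmt2_general α β1 β2 y1 n hβ1 hcase hn hn1
end

section
/- In the convex case β1 ≥ β2 of the piecewise-linear tax, with l_max(n) = β1·n for 0 < n < n1, l_max(n) = y1/n for n1 ≤ n ≤ n2, and l_max(n) = β2·n for n > n2, the balanced-budget condition ∫₀^∞ t(n·l_max(n)) f(n) dn = 0 is equivalent to α = ∫₀^{n1} (1−β1)β1 n² f(n) dn + (1−β1)y1 ∫_{n1}^{n2} f(n) dn + ∫_{n2}^∞ [(1−β2)β2 n² + (β2−β1)y1] f(n) dn. -/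
/-!
Writing `t = t₀ - α`, where `t₀` is the tax without the lump-sum subsidy, and using `∫ f = 1`,
the budget `∫ t(n lmax n) f(n) dn` equals the revenue `∫ t₀(n lmax n) f(n) dn` minus `α`.
Splitting `(0, ∞)` at `n1 ≤ n2`, the definition of `n1, n2` puts the income `n lmax n` below
the kink on `(0, n1)` (where it is `β1 n²`), at the kink on `[n1, n2]` and above it on
`(n2, ∞)` (where it is `β2 n²`), so on each piece `t₀(n lmax n)` is the integrand of the claim.
-/

open MeasureTheory Set

lemma Ioo_union_Icc_union_Ioi_eq_Ioi {c a b : ℝ} (hca : c < a) (hab : a ≤ b) :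
    Ioo c a ∪ Icc a b ∪ Ioi b = Ioi c := by
  rw [union_assoc, Icc_union_Ioi_eq_Ici hab, Ioo_union_Ici_eq_Ioi hca]

section ThreePieces

variable {E : Type*} [NormedAddCommGroup E] {μ : Measure ℝ} {g : ℝ → E}
  {c a b : ℝ}

lemma integrableOn_Ioi_of_Ioo_Icc_Ioi (hca : c < a) (hab : a ≤ b)
    (h₁ : IntegrableOn g (Ioo c a) μ) (h₂ : IntegrableOn g (Icc a b) μ)
    (h₃ : IntegrableOn g (Ioi b) μ) : IntegrableOn g (Ioi c) μ := by
  rw [← Ioo_union_Icc_union_Ioi_eq_Ioi hca hab]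
  exact (h₁.union h₂).union h₃

lemma setIntegral_Ioi_eq_Ioo_add_Icc_add_Ioi [NormedSpace ℝ E] (hca : c < a) (hab : a ≤ b)
    (h₁ : IntegrableOn g (Ioo c a) μ) (h₂ : IntegrableOn g (Icc a b) μ)
    (h₃ : IntegrableOn g (Ioi b) μ) :
    ∫ x in Ioi c, g x ∂μ =
      (∫ x in Ioo c a, g x ∂μ) + (∫ x in Icc a b, g x ∂μ) + ∫ x in Ioi b, g x ∂μ := by
  have hdisj : Disjoint (Ioo c a ∪ Icc a b) (Ioi b) :=
    disjoint_union_left.2 ⟨disjoint_left.2 fun x hx hx' => (hx.2.trans_le hab).not_gt hx',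
      disjoint_left.2 fun x hx hx' => hx.2.not_gt hx'⟩
  rw [← Ioo_union_Icc_union_Ioi_eq_Ioi hca hab,
    setIntegral_union hdisj measurableSet_Ioi (h₁.union h₂) h₃,
    setIntegral_union (disjoint_left.2 fun x hx hx' => hx.2.not_ge hx'.1) measurableSet_Icc
      h₁ h₂]

end ThreePieces

lemma IntegrableOn.quadratic_mul {μ : Measure ℝ} {f : ℝ → ℝ} {s : Set ℝ}
    (hf : IntegrableOn f s μ) (hf2 : IntegrableOn (fun x => x ^ 2 * f x) s μ) (p q : ℝ) :
    IntegrableOn (fun x => (p * x ^ 2 + q) * f x) s μ :=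
  ((hf2.const_mul p).add (hf.const_mul q)).congr <| .of_forall fun x => by
    simp only [Pi.add_apply]; ring

section Tax

variable {β1 β2 y1 n : ℝ}

lemma tax_eq_tax_zero_sub (α β1 β2 y1 y : ℝ) : tax α β1 β2 y1 y = tax 0 β1 β2 y1 y - α := by
  unfold tax; split_ifs <;> ring

lemma tax_zero_of_le {y : ℝ} (hy : y ≤ y1) : tax 0 β1 β2 y1 y = (1 - β1) * y := by
  simp [tax, hy]

lemma tax_zero_of_lt {y : ℝ} (hy : y1 < y) :
    tax 0 β1 β2 y1 y = (1 - β1) * y1 + (1 - β2) * (y - y1) := by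
  simp [tax, hy.not_ge]

lemma tax_zero_mul_of_lt_sqrt (hβ1 : 0 < β1) (hn : 0 < n) (hn1 : n < √(y1 / β1)) :
    tax 0 β1 β2 y1 (n * (β1 * n)) = (1 - β1) * β1 * n ^ 2 := by
  have hsq : n ^ 2 < y1 / β1 := (Real.lt_sqrt hn.le).1 hn1
  have hbelow : n * (β1 * n) ≤ y1 := by
    rw [lt_div_iff₀ hβ1] at hsq; nlinarith
  rw [tax_zero_of_le hbelow]; ring

lemma tax_zero_mul_self_div (hn : 0 < n) :
    tax 0 β1 β2 y1 (n * (y1 / n)) = (1 - β1) * y1 := by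
  rw [mul_div_cancel₀ y1 hn.ne', tax_zero_of_le le_rfl]

lemma tax_zero_mul_of_sqrt_lt (hβ2 : 0 < β2) (hn2 : √(y1 / β2) < n) :
    tax 0 β1 β2 y1 (n * (β2 * n)) = (1 - β2) * β2 * n ^ 2 + (β2 - β1) * y1 := by
  have hsq : y1 / β2 < n ^ 2 := (Real.sqrt_lt' ((Real.sqrt_nonneg _).trans_lt hn2)).1 hn2
  have habove : y1 < n * (β2 * n) := by
    rw [div_lt_iff₀ hβ2] at hsq; nlinarith
  rw [tax_zero_of_lt habove]; ring

lemma setIntegral_tax_mul_eq_sub (α : ℝ) {f Y : ℝ → ℝ} {s : Set ℝ} (hf : IntegrableOn f s)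
    (hf_one : ∫ n in s, f n = 1) (hrev : IntegrableOn (fun n => tax 0 β1 β2 y1 (Y n) * f n) s) :
    ∫ n in s, tax α β1 β2 y1 (Y n) * f n = (∫ n in s, tax 0 β1 β2 y1 (Y n) * f n) - α := by
  simp_rw [tax_eq_tax_zero_sub α, sub_mul]
  rw [integral_sub hrev (hf.const_mul α), integral_const_mul, hf_one, mul_one]

end Tax

theorem stmt6_general (α β1 β2 y1 n1 n2 : ℝ) (f : ℝ → ℝ)
    (hβ1 : β1 ∈ Set.Ioc (0:ℝ) 1) (hβ2 : β2 ∈ Set.Ioc (0:ℝ) 1)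
    (hy1 : 0 < y1) (hcase : β2 ≤ β1)
    (hn1 : n1 = Real.sqrt (y1 / β1)) (hn2 : n2 = Real.sqrt (y1 / β2))
    (hf_int : IntegrableOn f (Set.Ioi 0))
    (hf_one : ∫ n in Set.Ioi (0:ℝ), f n = 1)
    (hf2 : IntegrableOn (fun n => n ^ 2 * f n) (Set.Ioi 0))
    (lmax : ℝ → ℝ)
    (hl1 : ∀ n, 0 < n → n < n1 → lmax n = β1 * n)
    (hl2 : ∀ n, n1 ≤ n → n ≤ n2 → lmax n = y1 / n)
    (hl3 : ∀ n, n2 < n → lmax n = β2 * n) :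
    (∫ n in Set.Ioi (0:ℝ), tax α β1 β2 y1 (n * lmax n) * f n) = 0 ↔
      α = (∫ n in Set.Ioo (0:ℝ) n1, (1 - β1) * β1 * n ^ 2 * f n)
        + (1 - β1) * y1 * (∫ n in Set.Icc n1 n2, f n)
        + ∫ n in Set.Ioi n2, ((1 - β2) * β2 * n ^ 2 + (β2 - β1) * y1) * f n := by
  have hn1pos : 0 < n1 := hn1 ▸ Real.sqrt_pos.2 (div_pos hy1 hβ1.1)
  have hn12 : n1 ≤ n2 :=
    hn1 ▸ hn2 ▸ Real.sqrt_le_sqrt (div_le_div_of_nonneg_left hy1.le hβ2.1 hcase)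
  have hpiece {s : Set ℝ} (hs : s ⊆ Ioi 0) (p q : ℝ) :
      IntegrableOn (fun n => (p * n ^ 2 + q) * f n) s :=
    IntegrableOn.quadratic_mul (hf_int.mono_set hs) (hf2.mono_set hs) p q
  set R := fun n => tax 0 β1 β2 y1 (n * lmax n) * f n
  have hR₁ : EqOn R (fun n => ((1 - β1) * β1 * n ^ 2 + 0) * f n) (Ioo 0 n1) := fun n hn => by
    simp only [R, hl1 n hn.1 hn.2, tax_zero_mul_of_lt_sqrt hβ1.1 hn.1 (hn1 ▸ hn.2), add_zero]
  have hR₂ : EqOn R (fun n => (0 * n ^ 2 + (1 - β1) * y1) * f n) (Icc n1 n2) := fun n hn => by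
    simp only [R, hl2 n hn.1 hn.2, tax_zero_mul_self_div (hn1pos.trans_le hn.1), zero_mul,
      zero_add]
  have hR₃ : EqOn R (fun n => ((1 - β2) * β2 * n ^ 2 + (β2 - β1) * y1) * f n) (Ioi n2) :=
    fun n hn => by simp only [R, hl3 n hn, tax_zero_mul_of_sqrt_lt hβ2.1 (hn2 ▸ hn)]
  have hint₁ : IntegrableOn R (Ioo 0 n1) :=
    (hpiece Ioo_subset_Ioi_self _ _).congr_fun hR₁.symm measurableSet_Ioo
  have hint₂ : IntegrableOn R (Icc n1 n2) :=
    (hpiece (fun n hn => hn1pos.trans_le hn.1) _ _).congr_fun hR₂.symm measurableSet_Icc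
  have hint₃ : IntegrableOn R (Ioi n2) :=
    (hpiece (Ioi_subset_Ioi (hn1pos.le.trans hn12)) _ _).congr_fun hR₃.symm measurableSet_Ioi
  have hbudget := setIntegral_tax_mul_eq_sub α hf_int hf_one
    (integrableOn_Ioi_of_Ioo_Icc_Ioi hn1pos hn12 hint₁ hint₂ hint₃)
  have hrevenue : ∫ n in Ioi 0, R n = (∫ n in Ioo 0 n1, (1 - β1) * β1 * n ^ 2 * f n)
      + (1 - β1) * y1 * (∫ n in Icc n1 n2, f n)
      + ∫ n in Ioi n2, ((1 - β2) * β2 * n ^ 2 + (β2 - β1) * y1) * f n := by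
    rw [setIntegral_Ioi_eq_Ioo_add_Icc_add_Ioi hn1pos hn12 hint₁ hint₂ hint₃,
      setIntegral_congr_fun measurableSet_Ioo hR₁, setIntegral_congr_fun measurableSet_Icc hR₂,
      setIntegral_congr_fun measurableSet_Ioi hR₃, ← integral_const_mul]
    simp only [add_zero, zero_mul, zero_add]
  rw [hbudget, hrevenue, sub_eq_zero, eq_comm]

/-- Convex case `β1 ≥ β2`: with the optimal efforts `lmax n = β1 n` for `0 < n < n1`,
`lmax n = y1/n` for `n1 ≤ n ≤ n2` and `lmax n = β2 n` for `n > n2`, the balanced-budget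
condition `∫₀^∞ t(n lmax n) f(n) dn = 0` is equivalent to
`α = ∫₀^{n1} (1-β1) β1 n² f(n) dn + (1-β1) y1 ∫_{n1}^{n2} f(n) dn
   + ∫_{n2}^∞ [(1-β2) β2 n² + (β2-β1) y1] f(n) dn`. -/
theorem stmt6 (α β1 β2 y1 n1 n2 : ℝ) (f : ℝ → ℝ)
    (hα : 0 ≤ α) (hβ1 : β1 ∈ Set.Ioc (0:ℝ) 1) (hβ2 : β2 ∈ Set.Ioc (0:ℝ) 1)
    (hy1 : 0 < y1) (hcase : β2 ≤ β1)
    (hn1 : n1 = Real.sqrt (y1 / β1)) (hn2 : n2 = Real.sqrt (y1 / β2))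
    (hf_nonneg : ∀ n ∈ Set.Ioi (0:ℝ), 0 ≤ f n)
    (hf_int : IntegrableOn f (Set.Ioi 0))
    (hf_one : ∫ n in Set.Ioi (0:ℝ), f n = 1)
    (hf2 : IntegrableOn (fun n => n ^ 2 * f n) (Set.Ioi 0))
    (lmax : ℝ → ℝ)
    (hl1 : ∀ n, 0 < n → n < n1 → lmax n = β1 * n)
    (hl2 : ∀ n, n1 ≤ n → n ≤ n2 → lmax n = y1 / n)
    (hl3 : ∀ n, n2 < n → lmax n = β2 * n) :
    (∫ n in Set.Ioi (0:ℝ), tax α β1 β2 y1 (n * lmax n) * f n) = 0 ↔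
      α = (∫ n in Set.Ioo (0:ℝ) n1, (1 - β1) * β1 * n ^ 2 * f n)
        + (1 - β1) * y1 * (∫ n in Set.Icc n1 n2, f n)
        + ∫ n in Set.Ioi n2, ((1 - β2) * β2 * n ^ 2 + (β2 - β1) * y1) * f n :=
  stmt6_general α β1 β2 y1 n1 n2 f hβ1 hβ2 hy1 hcase hn1 hn2 hf_int hf_one hf2 lmax hl1 hl2 hl3
end

section
/- In the concave case β1 ≤ β2 of the piecewise-linear tax, if α equals ∫₀^{n3} (1−β1)β1 n² f(n) dn + ∫_{n3}^∞ [(1−β2)β2 n² + (β2−β1)y1] f(n) dn (the balanced-budget value), then the total expected utility U = ∫₀^∞ u_max(n) f(n) dn, where u_max(n) = α + β1²n²/2 for n ≤ n3 and u_max(n) = α + β2²n²/2 − y1(β2−β1) for n > n3, equals ∫₀^{n3} (β1 − β1²/2) n² f(n) dn + ∫_{n3}^∞ (β2 − β2²/2) n² f(n) dn. -/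
open MeasureTheory Set

/-!
Skill `n` earns `y = β n²` in the bracket it ends up in (`β = β1` for `n ≤ n3`, `β2` beyond), so
`u_max(n) = α + v(n) - τ(n)` pointwise, where `v(n) = y - y² / (2 n²) = (β - β² / 2) n²` is output
net of effort cost and `τ(n) = t(y) + α` is the tax paid before the transfer. Integrating against
`f`, the balanced budget `∫ τ f = α` and `∫ f = 1` make the two occurrences of `α` cancel.
-/

section PiecewiseIntegral

variable {μ : Measure ℝ} {a c : ℝ} {g h : ℝ → ℝ}

theorem integrableOn_Ioi_ite (hac : a ≤ c) (hg : IntegrableOn g (Ioc a c) μ)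
    (hh : IntegrableOn h (Ioi c) μ) :
    IntegrableOn (fun x => if x ≤ c then g x else h x) (Ioi a) μ := by
  rw [← Ioc_union_Ioi_eq_Ioi hac]
  exact (hg.congr_fun (fun x hx => (if_pos hx.2).symm) measurableSet_Ioc).union
    (hh.congr_fun (fun x hx => (if_neg (not_le.2 hx)).symm) measurableSet_Ioi)

theorem setIntegral_Ioi_ite (hac : a ≤ c) (hg : IntegrableOn g (Ioc a c) μ)
    (hh : IntegrableOn h (Ioi c) μ) :
    ∫ x in Ioi a, (if x ≤ c then g x else h x) ∂μ
      = (∫ x in Ioc a c, g x ∂μ) + ∫ x in Ioi c, h x ∂μ := by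
  have hite := integrableOn_Ioi_ite hac hg hh
  rw [← Ioc_union_Ioi_eq_Ioi hac] at hite ⊢
  rw [setIntegral_union (Ioc_disjoint_Ioi le_rfl) measurableSet_Ioi
    (hite.mono_set subset_union_left) (hite.mono_set subset_union_right)]
  congr 1
  · exact setIntegral_congr_fun measurableSet_Ioc fun x hx => if_pos hx.2
  · exact setIntegral_congr_fun measurableSet_Ioi fun x hx => if_neg (not_le.2 hx)

end PiecewiseIntegral

section QuadraticWeight

variable {μ : Measure ℝ} {s : Set ℝ} {f : ℝ → ℝ}

theorem MeasureTheory.IntegrableOn.const_mul_sq_mul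
    (hf2 : IntegrableOn (fun x => x ^ 2 * f x) s μ) (b : ℝ) :
    IntegrableOn (fun x => b * x ^ 2 * f x) s μ := by
  simp only [mul_assoc]
  exact hf2.const_mul b

theorem MeasureTheory.IntegrableOn.mul_sq_add_mul (hf2 : IntegrableOn (fun x => x ^ 2 * f x) s μ)
    (hf : IntegrableOn f s μ) (b a : ℝ) :
    IntegrableOn (fun x => (b * x ^ 2 + a) * f x) s μ := by
  simp only [add_mul]
  exact (hf2.const_mul_sq_mul b).fun_add (hf.const_mul a)

end QuadraticWeight

section PiecewiseLinearTax

noncomputable def netOutput (β1 β2 n3 n : ℝ) : ℝ :=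
  if n ≤ n3 then (β1 - β1 ^ 2 / 2) * n ^ 2 else (β2 - β2 ^ 2 / 2) * n ^ 2

noncomputable def taxPaid (β1 β2 y1 n3 n : ℝ) : ℝ :=
  if n ≤ n3 then (1 - β1) * β1 * n ^ 2 else (1 - β2) * β2 * n ^ 2 + (β2 - β1) * y1

theorem utility_eq_add_netOutput_sub_taxPaid (α β1 β2 y1 n3 n : ℝ) :
    (if n ≤ n3 then α + β1 ^ 2 * n ^ 2 / 2 else α + β2 ^ 2 * n ^ 2 / 2 - y1 * (β2 - β1))
      = α + netOutput β1 β2 n3 n - taxPaid β1 β2 y1 n3 n := by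
  unfold netOutput taxPaid
  split_ifs <;> ring

variable {β1 β2 y1 n3 : ℝ} {f : ℝ → ℝ}

theorem integrableOn_netOutput_mul (hn3 : 0 ≤ n3)
    (hf2 : IntegrableOn (fun n => n ^ 2 * f n) (Ioi 0)) :
    IntegrableOn (fun n => netOutput β1 β2 n3 n * f n) (Ioi 0) := by
  simp only [netOutput, ite_mul]
  exact integrableOn_Ioi_ite hn3 ((hf2.mono_set Ioc_subset_Ioi_self).const_mul_sq_mul _)
    ((hf2.mono_set (Ioi_subset_Ioi hn3)).const_mul_sq_mul _)

theorem setIntegral_netOutput_mul (hn3 : 0 ≤ n3)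
    (hf2 : IntegrableOn (fun n => n ^ 2 * f n) (Ioi 0)) :
    ∫ n in Ioi 0, netOutput β1 β2 n3 n * f n
      = (∫ n in Ioc 0 n3, (β1 - β1 ^ 2 / 2) * n ^ 2 * f n)
        + ∫ n in Ioi n3, (β2 - β2 ^ 2 / 2) * n ^ 2 * f n := by
  simp only [netOutput, ite_mul]
  exact setIntegral_Ioi_ite hn3 ((hf2.mono_set Ioc_subset_Ioi_self).const_mul_sq_mul _)
    ((hf2.mono_set (Ioi_subset_Ioi hn3)).const_mul_sq_mul _)

theorem integrableOn_taxPaid_mul (hn3 : 0 ≤ n3) (hf : IntegrableOn f (Ioi 0))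
    (hf2 : IntegrableOn (fun n => n ^ 2 * f n) (Ioi 0)) :
    IntegrableOn (fun n => taxPaid β1 β2 y1 n3 n * f n) (Ioi 0) := by
  simp only [taxPaid, ite_mul]
  exact integrableOn_Ioi_ite hn3 ((hf2.mono_set Ioc_subset_Ioi_self).const_mul_sq_mul _)
    ((hf2.mono_set (Ioi_subset_Ioi hn3)).mul_sq_add_mul (hf.mono_set (Ioi_subset_Ioi hn3)) _ _)

theorem setIntegral_taxPaid_mul (hn3 : 0 ≤ n3) (hf : IntegrableOn f (Ioi 0))
    (hf2 : IntegrableOn (fun n => n ^ 2 * f n) (Ioi 0)) :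
    ∫ n in Ioi 0, taxPaid β1 β2 y1 n3 n * f n
      = (∫ n in Ioc 0 n3, (1 - β1) * β1 * n ^ 2 * f n)
        + ∫ n in Ioi n3, ((1 - β2) * β2 * n ^ 2 + (β2 - β1) * y1) * f n := by
  simp only [taxPaid, ite_mul]
  exact setIntegral_Ioi_ite hn3 ((hf2.mono_set Ioc_subset_Ioi_self).const_mul_sq_mul _)
    ((hf2.mono_set (Ioi_subset_Ioi hn3)).mul_sq_add_mul (hf.mono_set (Ioi_subset_Ioi hn3)) _ _)

end PiecewiseLinearTax

theorem stmt7_general (α β1 β2 y1 n3 : ℝ) (f : ℝ → ℝ)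
    (hn3 : n3 = Real.sqrt (2 * y1 / (β1 + β2)))
    (hf_int : IntegrableOn f (Set.Ioi 0))
    (hf_one : ∫ n in Set.Ioi (0:ℝ), f n = 1)
    (hf2 : IntegrableOn (fun n => n ^ 2 * f n) (Set.Ioi 0))
    (hα : α = (∫ n in Set.Ioc (0:ℝ) n3, (1 - β1) * β1 * n ^ 2 * f n)
        + ∫ n in Set.Ioi n3, ((1 - β2) * β2 * n ^ 2 + (β2 - β1) * y1) * f n) :
    (∫ n in Set.Ioi (0:ℝ),
        (if n ≤ n3 then α + β1 ^ 2 * n ^ 2 / 2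
         else α + β2 ^ 2 * n ^ 2 / 2 - y1 * (β2 - β1)) * f n)
      = (∫ n in Set.Ioc (0:ℝ) n3, (β1 - β1 ^ 2 / 2) * n ^ 2 * f n)
        + ∫ n in Set.Ioi n3, (β2 - β2 ^ 2 / 2) * n ^ 2 * f n := by
  have hn3_nonneg : 0 ≤ n3 := hn3 ▸ Real.sqrt_nonneg _
  have hv : IntegrableOn (fun n => netOutput β1 β2 n3 n * f n) (Ioi 0) :=
    integrableOn_netOutput_mul hn3_nonneg hf2
  have ht : IntegrableOn (fun n => taxPaid β1 β2 y1 n3 n * f n) (Ioi 0) :=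
    integrableOn_taxPaid_mul hn3_nonneg hf_int hf2
  calc _ = ∫ n in Ioi 0, α * f n
          + (netOutput β1 β2 n3 n * f n - taxPaid β1 β2 y1 n3 n * f n) := by
        refine setIntegral_congr_fun measurableSet_Ioi fun n _ => ?_
        simp only [utility_eq_add_netOutput_sub_taxPaid]
        ring
    _ = α * 1 + (∫ n in Ioi 0, netOutput β1 β2 n3 n * f n) - α := by
        rw [integral_add (hf_int.const_mul α) (hv.fun_sub ht),
          integral_sub hv ht,
          integral_const_mul, hf_one, setIntegral_taxPaid_mul hn3_nonneg hf_int hf2, ← hα]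
        ring
    _ = _ := by rw [setIntegral_netOutput_mul hn3_nonneg hf2]; ring

/-- Concave case `β1 ≤ β2`: if `α` is the balanced-budget value, then the total expected
utility `U = ∫₀^∞ u_max(n) f(n) dn`, with `u_max(n) = α + β1² n²/2` for `n ≤ n3` and
`u_max(n) = α + β2² n²/2 - y1 (β2 - β1)` for `n > n3`, equals
`∫₀^{n3} (β1 - β1²/2) n² f(n) dn + ∫_{n3}^∞ (β2 - β2²/2) n² f(n) dn`. -/
theorem stmt7 (α β1 β2 y1 n3 : ℝ) (f : ℝ → ℝ)
    (hβ1 : β1 ∈ Set.Ioc (0:ℝ) 1) (hβ2 : β2 ∈ Set.Ioc (0:ℝ) 1)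
    (hy1 : 0 < y1) (hcase : β1 ≤ β2)
    (hn3 : n3 = Real.sqrt (2 * y1 / (β1 + β2)))
    (hf_nonneg : ∀ n ∈ Set.Ioi (0:ℝ), 0 ≤ f n)
    (hf_int : IntegrableOn f (Set.Ioi 0))
    (hf_one : ∫ n in Set.Ioi (0:ℝ), f n = 1)
    (hf2 : IntegrableOn (fun n => n ^ 2 * f n) (Set.Ioi 0))
    (hα : α = (∫ n in Set.Ioc (0:ℝ) n3, (1 - β1) * β1 * n ^ 2 * f n)
        + ∫ n in Set.Ioi n3, ((1 - β2) * β2 * n ^ 2 + (β2 - β1) * y1) * f n) :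
    (∫ n in Set.Ioi (0:ℝ),
        (if n ≤ n3 then α + β1 ^ 2 * n ^ 2 / 2
         else α + β2 ^ 2 * n ^ 2 / 2 - y1 * (β2 - β1)) * f n)
      = (∫ n in Set.Ioc (0:ℝ) n3, (β1 - β1 ^ 2 / 2) * n ^ 2 * f n)
        + ∫ n in Set.Ioi n3, (β2 - β2 ^ 2 / 2) * n ^ 2 * f n :=
  stmt7_general α β1 β2 y1 n3 f hn3 hf_int hf_one hf2 hα
end

section
/- For β1 ∈ (0,1] fixed and kink y1 > 0 fixed, the function β2 ↦ U(β1,β2) := ∫₀^{n3(β2)} (β1 − β1²/2) n² f(n) dn + ∫_{n3(β2)}^∞ (β2 − β2²/2) n² f(n) dn, where n3(β2) = √(2y1/(β1+β2)), is nondecreasing in β2 on the interval [β1, 1]. -/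
/-!
Let `φ β = β - β² / 2`, `G s = ∫_{n > s} n² f(n) dn` and `T = G 0`. Writing the lower integral as
`T - G (n₃ β₂)` gives `U(β₁, β₂) = φ β₁ T + (φ β₂ - φ β₁) G (n₃ β₂)`. On `[β₁, 1]` both factors of
the second term are nonnegative and nondecreasing: `φ` increases on `(-∞, 1]`, while the kink
`n₃ β₂ = √(2 y₁ / (β₁ + β₂))` moves left as `β₂` grows, so the tail `G (n₃ β₂)` grows.
-/

open MeasureTheory Set

section TailIntegral

variable {g : ℝ → ℝ} {a : ℝ}

theorem setIntegral_Ioc_eq_sub_setIntegral_Ioi (hg : IntegrableOn g (Ioi a)) {s : ℝ}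
    (has : a ≤ s) : ∫ x in Ioc a s, g x = (∫ x in Ioi a, g x) - ∫ x in Ioi s, g x := by
  rw [← Ioc_union_Ioi_eq_Ioi has, setIntegral_union (Ioc_disjoint_Ioi le_rfl) measurableSet_Ioi
    (hg.mono_set Ioc_subset_Ioi_self) (hg.mono_set (Ioi_subset_Ioi has))]
  ring

theorem setIntegral_Ioi_nonneg_of_le (hg0 : ∀ x ∈ Ioi a, 0 ≤ g x) {s : ℝ} (has : a ≤ s) :
    0 ≤ ∫ x in Ioi s, g x :=
  setIntegral_nonneg measurableSet_Ioi fun x hx => hg0 x (has.trans_lt hx)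

theorem antitoneOn_setIntegral_Ioi (hg : IntegrableOn g (Ioi a)) (hg0 : ∀ x ∈ Ioi a, 0 ≤ g x) :
    AntitoneOn (fun s => ∫ x in Ioi s, g x) (Ici a) := fun _ hs _ _ hst =>
  setIntegral_mono_set (hg.mono_set (Ioi_subset_Ioi hs))
    ((ae_restrict_iff' measurableSet_Ioi).2
      (.of_forall fun x hx => hg0 x (mem_Ioi.2 (lt_of_le_of_lt hs hx))))
    (Ioi_subset_Ioi hst).eventuallyLE

theorem const_mul_setIntegral_Ioc_add_const_mul_setIntegral_Ioi (hg : IntegrableOn g (Ioi a))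
    {s : ℝ} (has : a ≤ s) (c p : ℝ) :
    c * (∫ x in Ioc a s, g x) + p * ∫ x in Ioi s, g x
      = c * (∫ x in Ioi a, g x) + (p - c) * ∫ x in Ioi s, g x := by
  rw [setIntegral_Ioc_eq_sub_setIntegral_Ioi hg has]
  ring

end TailIntegral

theorem monotoneOn_sub_sq_div_two : MonotoneOn (fun β : ℝ => β - β ^ 2 / 2) (Iic 1) :=
  fun x hx y hy hxy => by
    simp only [mem_Iic] at hx hy
    nlinarith

theorem antitoneOn_sqrt_div_add {k : ℝ} (hk : 0 ≤ k) (c : ℝ) :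
    AntitoneOn (fun b => Real.sqrt (k / (c + b))) (Ioi (-c)) := fun x hx _ _ hxy =>
  Real.sqrt_le_sqrt <| div_le_div_of_nonneg_left hk (by simp only [mem_Ioi] at hx; linarith)
    (by linarith)

theorem stmt9_general (β1 y1 : ℝ) (f : ℝ → ℝ)
    (hβ1 : β1 ∈ Set.Ioc (0:ℝ) 1) (hy1 : 0 < y1)
    (hf_nonneg : ∀ n ∈ Set.Ioi (0:ℝ), 0 ≤ f n)
    (hf2 : IntegrableOn (fun n => n ^ 2 * f n) (Set.Ioi 0)) :
    MonotoneOn (fun β2 =>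
      (∫ n in Set.Ioc (0:ℝ) (Real.sqrt (2 * y1 / (β1 + β2))),
          (β1 - β1 ^ 2 / 2) * n ^ 2 * f n)
      + ∫ n in Set.Ioi (Real.sqrt (2 * y1 / (β1 + β2))),
          (β2 - β2 ^ 2 / 2) * n ^ 2 * f n)
      (Set.Icc β1 1) := by
  set φ : ℝ → ℝ := fun β => β - β ^ 2 / 2
  set kink : ℝ → ℝ := fun β2 => Real.sqrt (2 * y1 / (β1 + β2))
  set tail : ℝ → ℝ := fun s => ∫ n in Ioi s, n ^ 2 * f n
  have hg0 : ∀ n ∈ Ioi (0:ℝ), 0 ≤ n ^ 2 * f n := fun n hn =>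
    mul_nonneg (sq_nonneg n) (hf_nonneg n hn)
  have hkink : AntitoneOn kink (Icc β1 1) := (antitoneOn_sqrt_div_add (by positivity) β1).mono
    fun b hb => by simp only [mem_Ioi]; linarith [hβ1.1, hb.1]
  have hφ_mono : MonotoneOn φ (Icc β1 1) := monotoneOn_sub_sq_div_two.mono Icc_subset_Iic_self
  have hφ : MonotoneOn (fun β2 => φ β2 - φ β1) (Icc β1 1) := fun x hx y hy hxy =>
    sub_le_sub_right (hφ_mono hx hy hxy) _
  have htail : MonotoneOn (tail ∘ kink) (Icc β1 1) :=
    (antitoneOn_setIntegral_Ioi hf2 hg0).comp hkink fun b _ => Real.sqrt_nonneg _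
  refine ((hφ.mul htail ?_ ?_).const_add (φ β1 * tail 0)).congr fun β2 _ => ?_
  · exact fun b hb => sub_nonneg.2 (hφ_mono ⟨le_rfl, hβ1.2⟩ hb hb.1)
  · exact fun b _ => setIntegral_Ioi_nonneg_of_le hg0 (Real.sqrt_nonneg _)
  · simp only [mul_assoc, integral_const_mul]
    exact (const_mul_setIntegral_Ioc_add_const_mul_setIntegral_Ioi hf2
      (Real.sqrt_nonneg _) _ _).symm

/-- For fixed `β1 ∈ (0,1]` and kink `y1 > 0`, the balanced-budget total expected utility
`β2 ↦ U(β1, β2)` of the concave two-bracket tax is nondecreasing in `β2` on `[β1, 1]`. -/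
theorem stmt9 (β1 y1 : ℝ) (f : ℝ → ℝ)
    (hβ1 : β1 ∈ Set.Ioc (0:ℝ) 1) (hy1 : 0 < y1)
    (hf_cont : ContinuousOn f (Set.Ioi 0))
    (hf_nonneg : ∀ n ∈ Set.Ioi (0:ℝ), 0 ≤ f n)
    (hf_int : IntegrableOn f (Set.Ioi 0))
    (hf_one : ∫ n in Set.Ioi (0:ℝ), f n = 1)
    (hf2 : IntegrableOn (fun n => n ^ 2 * f n) (Set.Ioi 0)) :
    MonotoneOn (fun β2 =>
      (∫ n in Set.Ioc (0:ℝ) (Real.sqrt (2 * y1 / (β1 + β2))),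
          (β1 - β1 ^ 2 / 2) * n ^ 2 * f n)
      + ∫ n in Set.Ioi (Real.sqrt (2 * y1 / (β1 + β2))),
          (β2 - β2 ^ 2 / 2) * n ^ 2 * f n)
      (Set.Icc β1 1) :=
  stmt9_general β1 y1 f hβ1 hy1 hf_nonneg hf2
end

section
/- Under the balanced-budget linear tax, set U(β) = β(1 − β/2)·E[N²] and σ_u(β) = (β²/2)·σ(N²), where σ(N²) = √Var(N²). Then for every β ∈ (0,1], the normalized quantities Ũ = U(β)/E[N²] and σ̃ = σ_u(β)/σ(N²) satisfy the efficient-frontier equation 2σ̃ = (σ̃ + Ũ)². -/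
open MeasureTheory Set

/- After normalization σ̃ = β²/2 and Ũ = β - β²/2, so σ̃ + Ũ = β and both sides equal β². -/
lemma two_mul_half_sq_eq_add_sq (β : ℝ) :
    2 * (β ^ 2 / 2) = (β ^ 2 / 2 + β * (1 - β / 2)) ^ 2 := by
  ring

theorem stmt15_general (M s β : ℝ) (hM : 0 < M) (hs : 0 < s) :
    2 * ((β ^ 2 / 2 * s) / s) = ((β ^ 2 / 2 * s) / s + (β * (1 - β / 2) * M) / M) ^ 2 := by
  rw [mul_div_cancel_right₀ _ hs.ne', mul_div_cancel_right₀ _ hM.ne']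
  exact two_mul_half_sq_eq_add_sq β

/-- Under the balanced-budget linear tax, with `U(β) = β (1 - β/2) E[N²]` and
`σ_u(β) = (β²/2) σ(N²)`, the normalized quantities `Ũ = U(β)/E[N²]` and
`σ̃ = σ_u(β)/σ(N²)` satisfy the efficient-frontier equation `2 σ̃ = (σ̃ + Ũ)²`. -/
theorem stmt15 (M s β : ℝ) (hM : 0 < M) (hs : 0 < s) (hβ : β ∈ Set.Ioc (0:ℝ) 1) :
    2 * ((β ^ 2 / 2 * s) / s) = ((β ^ 2 / 2 * s) / s + (β * (1 - β / 2) * M) / M) ^ 2 :=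
  stmt15_general M s β hM hs
end

section
/- For the logarithmic utility u(c,l) = ln(c) + A·ln(1 − l) with A > 0 under the linear tax with α > 0, β ∈ (0,1), and with the skill N uniformly distributed on [0, s] (s > α/(Aβ)), the balanced-budget condition E[t(N·l_max(N))] = 0 holds if and only if α/(βs) = (A/(1−β))·(1 + Aβ − √((A+1)β(2 + (A−1)β))). -/
/-!
Writing `n₀ = α/(Aβ)` for the skill at which work starts, the income is
`n · l_max(n) = A/(A+1) · max(n - n₀, 0)`, so the budget integral over `[0, s]` is
`-αs + (1-β)A(s-n₀)²/(2(A+1))`. With `t = 1 + Aβ - (1-β)α/(Aβs)` this equals a positive multiple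
of `t² - (A+1)β(2+(A-1)β)`. Since `s > n₀` forces `t > 0`, the budget balances iff `t` is the
positive square root, which is the claimed value of `α/(βs)`.
-/

open MeasureTheory Set

noncomputable def ltax (α β y : ℝ) : ℝ := -α + (1 - β) * y

theorem integral_max_sub_zero {a b : ℝ} (ha : 0 ≤ a) (hab : a ≤ b) :
    ∫ n in (0:ℝ)..b, max (n - a) 0 = (b - a) ^ 2 / 2 := by
  have hcont : Continuous fun n : ℝ => max (n - a) 0 := by fun_prop
  have below : ∫ n in (0:ℝ)..a, max (n - a) 0 = 0 := by
    refine intervalIntegral.integral_zero_ae (Filter.Eventually.of_forall fun n hn => ?_)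
    rw [uIoc_of_le ha] at hn
    exact max_eq_right (by linarith [hn.2])
  have above : ∫ n in a..b, max (n - a) 0 = (b - a) ^ 2 / 2 := by
    rw [intervalIntegral.integral_congr (g := fun n => n - a) fun n hn => ?_]
    · simp only [intervalIntegral.intervalIntegrable_id, intervalIntegrable_const,
        intervalIntegral.integral_sub, integral_id, intervalIntegral.integral_const, smul_eq_mul]
      ring
    rw [uIcc_of_le hab] at hn
    exact max_eq_left (by linarith [hn.1])
  rw [← intervalIntegral.integral_add_adjacent_intervals
    (hcont.intervalIntegrable 0 a) (hcont.intervalIntegrable a b), below, above, zero_add]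

theorem mul_lmax_eq {A α β n : ℝ} {lmax : ℝ → ℝ} (hA : 0 < A) (hβ : 0 < β) (hn : 0 < n)
    (hl : ∀ n, lmax n =
      if α / (A * β) ≤ n then (A * β * n - α) / ((A + 1) * β * n) else 0) :
    n * lmax n = A / (A + 1) * max (n - α / (A * β)) 0 := by
  have hAβ : 0 < A * β := mul_pos hA hβ
  rw [hl]
  split_ifs with h
  · rw [max_eq_left (sub_nonneg.mpr h)]
    field_simp
  · rw [max_eq_right (by linarith [not_le.mp h]), mul_zero, mul_zero]

theorem integral_ltax_mul_lmax {A α β s : ℝ} {lmax : ℝ → ℝ} (hA : 0 < A) (hβ : 0 < β)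
    (hα : 0 < α) (hs : α / (A * β) ≤ s)
    (hl : ∀ n, lmax n =
      if α / (A * β) ≤ n then (A * β * n - α) / ((A + 1) * β * n) else 0) :
    ∫ n in Ioc (0:ℝ) s, ltax α β (n * lmax n) =
      -α * s + (1 - β) * A / (A + 1) * ((s - α / (A * β)) ^ 2 / 2) := by
  have hn0 : 0 ≤ α / (A * β) := by positivity
  rw [setIntegral_congr_fun measurableSet_Ioc fun n hn => by
      rw [ltax, mul_lmax_eq hA hβ hn.1 hl, ← mul_assoc],
    ← intervalIntegral.integral_of_le (hn0.trans hs),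
    intervalIntegral.integral_add intervalIntegrable_const
      ((by fun_prop : Continuous fun n : ℝ => max (n - α / (A * β)) 0).intervalIntegrable
        0 s |>.const_mul _),
    intervalIntegral.integral_const_mul, integral_max_sub_zero hn0 hs,
    intervalIntegral.integral_const]
  simp only [sub_zero, smul_eq_mul]
  ring

theorem budget_eq_mul_sq_sub {A α β s : ℝ} (hA : 0 < A) (hβ : 0 < β) (hβ1 : β < 1)
    (hs : 0 < s) :
    -α * s + (1 - β) * A / (A + 1) * ((s - α / (A * β)) ^ 2 / 2) =
      A * s ^ 2 / (2 * (A + 1) * (1 - β)) *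
        ((1 + A * β - (1 - β) * (α / (A * β * s))) ^ 2 - (A + 1) * β * (2 + (A - 1) * β)) := by
  have : 1 - β ≠ 0 := by linarith
  field_simp
  ring

theorem budget_div_eq_zero_iff {A α β s : ℝ} (hA : 0 < A) (hα : 0 < α) (hβ : 0 < β)
    (hβ1 : β < 1) (hs : α / (A * β) < s) :
    (-α * s + (1 - β) * A / (A + 1) * ((s - α / (A * β)) ^ 2 / 2)) / s = 0 ↔
      α / (β * s) = A / (1 - β)
        * (1 + A * β - Real.sqrt ((A + 1) * β * (2 + (A - 1) * β))) := by
  have h1β : 0 < 1 - β := by linarith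
  have hs0 : 0 < s := (by positivity : 0 < α / (A * β)).trans hs
  have hu : α / (A * β * s) < 1 := by
    rw [div_lt_one (by positivity)]
    rwa [div_lt_iff₀ (by positivity), mul_comm] at hs
  set D := (A + 1) * β * (2 + (A - 1) * β)
  set t := 1 + A * β - (1 - β) * (α / (A * β * s))
  have hD : 0 ≤ D := by
    have : 0 < 2 + (A - 1) * β := by nlinarith
    positivity
  have ht : 0 < t := by nlinarith
  have hα_t : α / (β * s) = A / (1 - β) * (1 + A * β - t) := by
    simp only [t]
    field_simp
    ring
  rw [budget_eq_mul_sq_sub hA hβ hβ1 hs0, div_eq_zero_iff, or_iff_left hs0.ne', mul_eq_zero,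
    or_iff_right (by positivity), sub_eq_zero, eq_comm, ← Real.sqrt_eq_iff_eq_sq hD ht.le, hα_t,
    mul_right_inj' (by positivity), sub_right_inj, eq_comm]

/-- For the logarithmic utility `u(c,l) = ln c + A ln(1-l)` under the linear tax, with
the skill `N` uniform on `[0,s]` (`s > α/(Aβ)`) and the optimal efforts `l_max`, the
balanced-budget condition `E[t(N l_max(N))] = 0` holds iff
`α/(βs) = (A/(1-β)) (1 + Aβ - √((A+1) β (2 + (A-1) β)))`. -/
theorem stmt19 (A α β s : ℝ) (lmax : ℝ → ℝ)
    (hA : 0 < A) (hα : 0 < α) (hβ : β ∈ Set.Ioo (0:ℝ) 1)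
    (hs : α / (A * β) < s)
    (hl : ∀ n, lmax n =
      if α / (A * β) ≤ n then (A * β * n - α) / ((A + 1) * β * n) else 0) :
    ((∫ n in Set.Ioc (0:ℝ) s, ltax α β (n * lmax n)) / s = 0 ↔
      α / (β * s) = A / (1 - β)
        * (1 + A * β - Real.sqrt ((A + 1) * β * (2 + (A - 1) * β)))) := by
  rw [integral_ltax_mul_lmax hA hβ.1 hα hs.le hl]
  exact budget_div_eq_zero_iff hA hα hβ.1 hβ.2 hs
end
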